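/- Let H be a nonempty history with n operations and concurrency k. Then the number of partition states of H satisfies |𝒮_H| ≤ 2n·2^k. -/

import Mathlib

structure Operation (M V : Type) where
  id : ℕ
  method : M
  value : V
  tinv : ℚ
  tres : ℚ
deriving DecidableEq

def WellFormed {M V : Type} (H : Finset (Operation M V)) : Prop :=
  ∀ o ∈ H, o.tinv < o.tres

def IsPartitionState {M V : Type} (H S : Finset (Operation M V)) : Prop :=
  S ⊆ H ∧ ∃ t : ℚ, ∀ o ∈ H, (o.tres < t → o ∈ S) ∧ (t < o.tinv → o ∉ S)

def IsLinearization {M V : Type} (X : Finset (Operation M V)) (ℓ : Operation M V → ℚ) : Prop :=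
  Set.InjOn ℓ ↑X ∧ ∀ o ∈ X, o.tinv < ℓ o ∧ ℓ o < o.tres

/-- The set of all invocation and response times of `H`. -/
def histTimes {M V : Type} [DecidableEq M] [DecidableEq V]
    (H : Finset (Operation M V)) : Finset ℚ :=
  H.image (fun o => o.tinv) ∪ H.image (fun o => o.tres)

/-- Concurrency: the maximum over t ∈ 𝒯_H of the number of operations whose
interval contains t. -/
def concurrency {M V : Type} [DecidableEq M] [DecidableEq V]
    (H : Finset (Operation M V)) : ℕ :=
  (histTimes H).sup (fun t => (H.filter (fun o => o.tinv ≤ t ∧ t ≤ o.tres)).card)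

/-!
A partition state is determined by a cut time `t` only through the relative order of `t` and
the invocation and response times. So every partition state can be realised with `t` moved to a
time of `𝒯_H`, and is then the set of operations completed before `t` together with some subset
of the at most `k` operations whose interval contains `t`. There are at most `2n` such times and
at most `2^k` such subsets.
-/

section

variable {M V : Type}

def completedBefore (H : Finset (Operation M V)) (t : ℚ) : Finset (Operation M V) :=
  H.filter fun o => o.tres < t

def activeAt (H : Finset (Operation M V)) (t : ℚ) : Finset (Operation M V) :=
  H.filter fun o => o.tinv ≤ t ∧ t ≤ o.tres

theorem eq_completedBefore_union_of_cut [DecidableEq M] [DecidableEq V]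
    {H S : Finset (Operation M V)} {t t' : ℚ} (hSH : S ⊆ H)
    (ht : ∀ o ∈ H, (o.tres < t → o ∈ S) ∧ (t < o.tinv → o ∉ S))
    (hres : ∀ o ∈ H, o.tres < t' → o.tres < t)
    (hinv : ∀ o ∈ H, o.tinv ≤ t → o.tinv ≤ t') :
    S = completedBefore H t' ∪ activeAt S t' := by
  ext o
  simp only [completedBefore, activeAt, Finset.mem_union, Finset.mem_filter]
  constructor
  · intro hoS
    by_cases hlt : o.tres < t'
    · exact Or.inl ⟨hSH hoS, hlt⟩
    · have hinv_le : o.tinv ≤ t := not_lt.mp fun h => (ht o (hSH hoS)).2 h hoS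
      exact Or.inr ⟨hoS, hinv o (hSH hoS) hinv_le, not_lt.mp hlt⟩
  · rintro (⟨hoH, hlt⟩ | ⟨hoS, -⟩)
    · exact (ht o hoH).1 (hres o hoH hlt)
    · exact hoS

variable [DecidableEq M] [DecidableEq V]

theorem tinv_mem_histTimes {H : Finset (Operation M V)} {o : Operation M V} (ho : o ∈ H) :
    o.tinv ∈ histTimes H :=
  Finset.mem_union_left _ (Finset.mem_image_of_mem _ ho)

theorem tres_mem_histTimes {H : Finset (Operation M V)} {o : Operation M V} (ho : o ∈ H) :
    o.tres ∈ histTimes H :=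
  Finset.mem_union_right _ (Finset.mem_image_of_mem _ ho)

theorem card_histTimes_le (H : Finset (Operation M V)) : (histTimes H).card ≤ 2 * H.card :=
  calc (histTimes H).card
      ≤ (H.image fun o => o.tinv).card + (H.image fun o => o.tres).card :=
        Finset.card_union_le _ _
    _ ≤ H.card + H.card := add_le_add Finset.card_image_le Finset.card_image_le
    _ = 2 * H.card := (two_mul _).symm

theorem card_activeAt_le_concurrency {H : Finset (Operation M V)} {t : ℚ}
    (ht : t ∈ histTimes H) : (activeAt H t).card ≤ concurrency H :=
  Finset.le_sup (f := fun t => (activeAt H t).card) ht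

/-- Take `t'` the largest history time `≤ t`, or the smallest history time if there is none. -/
theorem exists_mem_histTimes_cut {H : Finset (Operation M V)} (hne : H.Nonempty) (t : ℚ) :
    ∃ t' ∈ histTimes H, (∀ o ∈ H, o.tres < t' → o.tres < t) ∧
      (∀ o ∈ H, o.tinv ≤ t → o.tinv ≤ t') := by
  by_cases hA : ((histTimes H).filter (· ≤ t)).Nonempty
  · obtain ⟨ht'H, ht't⟩ := Finset.mem_filter.mp (Finset.max'_mem _ hA)
    refine ⟨_, ht'H, fun o _ hlt => hlt.trans_le ht't, fun o ho hle => ?_⟩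
    exact Finset.le_max' _ _ (Finset.mem_filter.mpr ⟨tinv_mem_histTimes ho, hle⟩)
  · have hgt : ∀ τ ∈ histTimes H, t < τ := fun τ hτ =>
      not_le.mp fun hle => hA ⟨τ, Finset.mem_filter.mpr ⟨hτ, hle⟩⟩
    have hTne : (histTimes H).Nonempty := hne.image _ |>.mono Finset.subset_union_left
    refine ⟨_, Finset.min'_mem _ hTne, fun o ho hlt => ?_, fun o ho hle => ?_⟩
    · exact absurd (Finset.min'_le _ _ (tres_mem_histTimes ho)) (not_le.mpr hlt)
    · exact absurd hle (not_le.mpr (hgt _ (tinv_mem_histTimes ho)))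

def cutStates (H : Finset (Operation M V)) : Finset (Finset (Operation M V)) :=
  (histTimes H).biUnion fun t => (activeAt H t).powerset.image (completedBefore H t ∪ ·)

theorem IsPartitionState.mem_cutStates {H S : Finset (Operation M V)} (hne : H.Nonempty)
    (hS : IsPartitionState H S) : S ∈ cutStates H := by
  obtain ⟨hSH, t, ht⟩ := hS
  obtain ⟨t', ht'H, hres, hinv⟩ := exists_mem_histTimes_cut hne t
  refine Finset.mem_biUnion.mpr ⟨t', ht'H, Finset.mem_image.mpr ⟨_, ?_,
    (eq_completedBefore_union_of_cut hSH ht hres hinv).symm⟩⟩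
  exact Finset.mem_powerset.mpr (Finset.filter_subset_filter _ hSH)

theorem card_cutStates_le (H : Finset (Operation M V)) :
    (cutStates H).card ≤ 2 * H.card * 2 ^ concurrency H :=
  calc (cutStates H).card
      ≤ ∑ t ∈ histTimes H,
          ((activeAt H t).powerset.image (completedBefore H t ∪ ·)).card :=
        Finset.card_biUnion_le
    _ ≤ ∑ _t ∈ histTimes H, 2 ^ concurrency H := by
        refine Finset.sum_le_sum fun t ht => Finset.card_image_le.trans ?_
        rw [Finset.card_powerset]
        exact Nat.pow_le_pow_right two_pos (card_activeAt_le_concurrency ht)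
    _ = (histTimes H).card * 2 ^ concurrency H := by rw [Finset.sum_const, smul_eq_mul]
    _ ≤ 2 * H.card * 2 ^ concurrency H := Nat.mul_le_mul_right _ (card_histTimes_le H)

end

theorem stmt0_general {M V : Type} [DecidableEq M] [DecidableEq V]
    (H : Finset (Operation M V)) (hne : H.Nonempty)
    (n k : ℕ) (hn : n = H.card) (hk : k = concurrency H) :
    {S : Finset (Operation M V) | IsPartitionState H S}.ncard ≤ 2 * n * 2 ^ k := by
  subst hn hk
  calc {S : Finset (Operation M V) | IsPartitionState H S}.ncard
      ≤ (cutStates H : Set (Finset (Operation M V))).ncard :=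
        Set.ncard_le_ncard (fun _ hS => hS.mem_cutStates hne) (Finset.finite_toSet _)
    _ = (cutStates H).card := Set.ncard_coe_finset _
    _ ≤ 2 * H.card * 2 ^ concurrency H := card_cutStates_le H

theorem stmt0 {M V : Type} [DecidableEq M] [DecidableEq V]
    (H : Finset (Operation M V)) (hne : H.Nonempty) (hwf : WellFormed H)
    (n k : ℕ) (hn : n = H.card) (hk : k = concurrency H) :
    {S : Finset (Operation M V) | IsPartitionState H S}.ncard ≤ 2 * n * 2 ^ k :=
  stmt0_general H hne n k hn hk
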